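/- arXiv:1608.07643 — 4 statements merged into one kernel-verified Lean document; each statement's English description precedes it below -/
import Mathlib

section
/- With notation as above, for each fixed t with 1 ≤ t ≤ n, the cardinality of {u : (t,u) ∈ A} equals sp(t) + sp(t+1) + ... + sp(n), where A = {(a,b) : 2(p_a + r_b) > ω} and sp is the split index function. -/
/-
Put `g a = 2 p_a - ω`, strictly decreasing, and `x u = -2 r_u`, which never equals a value of `g`.
The `a` with `x u < g a` form an initial segment of `Fin n`, of length `c u` say, so
`(t, u) ∈ A ↔ t < c u`, while `sp(j)` counts exactly the `u` with `c u = j`: those for which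
`x u` falls between `g j` and `g (j - 1)`. Splitting `{u | t < c u}` by the value of `c u` gives
the sum.
-/

/-- The `i`-th split index, as in the paper. -/
noncomputable def splitIndex (n n' : ℕ) (p : Fin n → ℤ) (r : Fin n' → ℤ) (ω : ℤ)
    (i : Fin (n + 1)) : ℕ :=
  Nat.card {u : Fin n' //
    (∀ h : i.val < n, 2 * p ⟨i.val, h⟩ - ω < -2 * r u) ∧
    (∀ _ : 0 < i.val, -2 * r u < 2 * p ⟨i.val - 1, by have := i.isLt; omega⟩ - ω)}

open Finset

section InsertionIndex

variable {α : Type*} [LinearOrder α] {n : ℕ}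

noncomputable def insertionIndex (g : Fin n → α) (x : α) : ℕ := #{a | x < g a}

variable {g : Fin n → α} {x : α}

theorem insertionIndex_le : insertionIndex g x ≤ n :=
  (card_filter_le _ _).trans_eq (card_fin n)

theorem lt_apply_iff_lt_insertionIndex (hg : Antitone g) (a : Fin n) :
    x < g a ↔ a.val < insertionIndex g x := by
  constructor
  · intro hxa
    have hsub : Iic a ⊆ ({b | x < g b} : Finset _) := fun b hb ↦ by
      simpa using hxa.trans_le (hg (mem_Iic.1 hb))
    exact Nat.lt_of_succ_le ((Fin.card_Iic a).symm.trans_le (card_le_card hsub))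
  · intro ha
    by_contra! hxa
    have hsub : ({b | x < g b} : Finset _) ⊆ Iio a := fun b hb ↦
      mem_Iio.2 (lt_of_not_ge fun hab ↦ (((mem_filter_univ _).1 hb).trans_le (hg hab)).not_ge hxa)
    exact (card_le_card hsub).not_gt ((Fin.card_Iio a).trans_lt ha)

theorem insertionIndex_eq_iff (hg : Antitone g) (hx : ∀ a, g a ≠ x) (j : Fin (n + 1)) :
    insertionIndex g x = j ↔
      (∀ h : j.val < n, g ⟨j.val, h⟩ < x) ∧
      (∀ h : 0 < j.val, x < g ⟨j.val - 1, by omega⟩) := by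
  have apply_lt_iff (a : Fin n) : g a < x ↔ ¬ a.val < insertionIndex g x := by
    rw [← lt_apply_iff_lt_insertionIndex hg, not_lt, (hx a).le_iff_lt]
  simp only [apply_lt_iff, lt_apply_iff_lt_insertionIndex hg]
  have := insertionIndex_le (g := g) (x := x)
  omega

end InsertionIndex

theorem card_filter_lt_eq_sum_card_filter_eq {ι : Type*} [Fintype ι] {n : ℕ} (f : ι → ℕ)
    (hf : ∀ i, f i ≤ n) (k : ℕ) :
    #{i | k < f i} = ∑ j : Fin (n + 1) with k + 1 ≤ j.val, #{i | f i = j} := by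
  rw [card_eq_sum_card_fiberwise (f := fun i ↦ (⟨f i, Nat.lt_succ_of_le (hf i)⟩ : Fin (n + 1)))
    (t := {j | k + 1 ≤ j.val}) fun i hi ↦ by simpa [Nat.succ_le_iff] using hi]
  refine sum_congr rfl fun j hj ↦ ?_
  rw [filter_filter]
  refine congrArg card (filter_congr fun i _ ↦ ?_)
  rw [mem_filter_univ] at hj
  simp only [Fin.ext_iff]
  omega

theorem splitIndex_eq_card_insertionIndex_eq {n n' : ℕ} {p : Fin n → ℤ} {ω : ℤ}
    (hg : Antitone fun a ↦ 2 * p a - ω) (r : Fin n' → ℤ) (h : ∀ a b, 2 * (p a + r b) ≠ ω)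
    (j : Fin (n + 1)) :
    splitIndex n n' p r ω j = #{u | insertionIndex (fun a ↦ 2 * p a - ω) (-2 * r u) = j} := by
  rw [splitIndex, Nat.card_eq_fintype_card, Fintype.card_subtype]
  refine congrArg card (filter_congr fun u _ ↦ ?_)
  rw [insertionIndex_eq_iff hg fun a heq ↦ h a u (by omega)]

theorem stmt_3_general (n n' : ℕ) (p : Fin n → ℤ) (r : Fin n' → ℤ)
    (hp : StrictAnti p) (ω : ℤ)
    (h : ∀ a b, 2 * (p a + r b) ≠ ω) (t : Fin n) :
    Nat.card {u : Fin n' // 2 * (p t + r u) > ω} =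
      ∑ j ∈ Finset.univ.filter (fun j : Fin (n + 1) => t.val + 1 ≤ j.val),
        splitIndex n n' p r ω j := by
  have hg : Antitone fun a ↦ 2 * p a - ω := fun a b hab ↦ by
    beta_reduce
    linarith [hp.antitone hab]
  have mem_A_iff (u : Fin n') :
      2 * (p t + r u) > ω ↔ t.val < insertionIndex (fun a ↦ 2 * p a - ω) (-2 * r u) := by
    rw [← lt_apply_iff_lt_insertionIndex hg]
    omega
  rw [Nat.card_eq_fintype_card, Fintype.card_subtype, filter_congr fun u _ ↦ mem_A_iff u,
    card_filter_lt_eq_sum_card_filter_eq _ fun u ↦ insertionIndex_le]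
  exact sum_congr rfl fun j _ ↦ (splitIndex_eq_card_insertionIndex_eq hg r h j).symm

theorem stmt_3 (n n' : ℕ) (p : Fin n → ℤ) (r : Fin n' → ℤ)
    (hp : StrictAnti p) (hr : StrictAnti r) (ω : ℤ)
    (h : ∀ a b, 2 * (p a + r b) ≠ ω) (t : Fin n) :
    Nat.card {u : Fin n' // 2 * (p t + r u) > ω} =
      ∑ j ∈ Finset.univ.filter (fun j : Fin (n + 1) => t.val + 1 ≤ j.val),
        splitIndex n n' p r ω j :=
  stmt_3_general n n' p r hp ω h t
end

section
/- The split indices satisfy the symmetry sp(i, M; M') = sp(n - i, M^c; M'^c): if we replace the sequences p_i by p_i^c := ω(M) - p_{n+1-i} and r_j by r_j^c := ω(M') - r_{n'+1-j}, then the split index of the new data at position i equals the split index of the original data at position n - i. -/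
theorem stmt_5 (n n' : ℕ) (p : Fin n → ℤ) (r : Fin n' → ℤ)
    (hp : StrictAnti p) (hr : StrictAnti r) (ω1 ω2 : ℤ)
    (h : ∀ a b, 2 * (p a + r b) ≠ ω1 + ω2) (i : Fin (n + 1)) :
    splitIndex n n' (fun a => ω1 - p a.rev) (fun b => ω2 - r b.rev) (ω1 + ω2) i =
      splitIndex n n' p r (ω1 + ω2) i.rev := by
  have pcast : ∀ (a b : Fin n), a.val = b.val → p a = p b :=
    fun a b hab => congrArg p (Fin.ext hab)
  have hin := i.isLt
  have hrev : (i.rev : ℕ) = n - i.val := by simp [Fin.val_rev]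
  unfold splitIndex
  apply Nat.card_congr
  refine Equiv.subtypeEquiv Fin.revPerm fun u => ?_
  simp only [Fin.revPerm_apply]
  constructor
  · rintro ⟨h1, h2⟩
    refine ⟨fun hn => ?_, fun hi0 => ?_⟩
    · have hi : 0 < i.val := by omega
      have := h2 hi
      rw [pcast (⟨(i.val - 1 : ℕ), by omega⟩ : Fin n).rev ⟨(i.rev : ℕ), hn⟩
        (by simp [Fin.val_rev]; omega)] at this
      linarith
    · have hi : i.val < n := by omega
      have := h1 hi
      rw [pcast (⟨i.val, hi⟩ : Fin n).rev ⟨(i.rev : ℕ) - 1, by omega⟩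
        (by simp [Fin.val_rev]; omega)] at this
      linarith
  · rintro ⟨h1, h2⟩
    refine ⟨fun hn => ?_, fun hi0 => ?_⟩
    · have := h2 (by omega)
      rw [pcast ⟨(i.rev : ℕ) - 1, by omega⟩ (⟨i.val, hn⟩ : Fin n).rev
        (by simp [Fin.val_rev]; omega)] at this
      linarith
    · have := h1 (by omega)
      rw [pcast ⟨(i.rev : ℕ), by omega⟩ (⟨(i.val - 1 : ℕ), by omega⟩ : Fin n).rev
        (by simp [Fin.val_rev]; omega)] at this
      linarith
end

section
/- In the setting of the previous statement (G cyclic generated by σ acting on abelian group A, Hilbert 90 hypothesis, χ : A →* ℂˣ with χ∘τ = χ for all τ ∈ G), the map η₀ : N(A) → ℂˣ defined by η₀(N(z)) = χ(z) is a well-defined group homomorphism. -/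
theorem stmt_12 (G : Type*) [Group G] [Fintype G] (A : Type*) [CommGroup A]
    [MulDistribMulAction G A] (σ : G) (hσ : ∀ g : G, g ∈ Subgroup.zpowers σ)
    (N : A →* A) (hN : ∀ a, N a = ∏ τ : G, τ • a)
    (hilbert90 : ∀ a : A, N a = 1 → ∃ t : A, a = (σ • t) * t⁻¹)
    (χ : A →* ℂˣ) (hχ : ∀ (τ : G) (a : A), χ (τ • a) = χ a) :
    ∃ η₀ : N.range →* ℂˣ, ∀ z : A, η₀ ⟨N z, ⟨z, rfl⟩⟩ = χ z := by
  have key : ∀ z w : A, N z = N w → χ z = χ w := by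
    intro z w h
    have h1 : N (z * w⁻¹) = 1 := by
      rw [map_mul, map_inv, h, mul_inv_cancel]
    obtain ⟨t, ht⟩ := hilbert90 _ h1
    have : χ (z * w⁻¹) = 1 := by
      rw [ht, map_mul, map_inv, hχ σ t, mul_inv_cancel]
    have := this
    rw [map_mul, map_inv] at this
    exact mul_inv_eq_one.mp this
  refine ⟨{ toFun := fun x => χ x.2.choose, map_one' := ?_, map_mul' := ?_ }, ?_⟩
  · have h := (1 : N.range).2.choose_spec
    have : χ (1 : N.range).2.choose = χ (1 : A) := key _ _ (by rw [h, map_one]; rfl)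
    simpa using this
  · intro a b
    have ha := a.2.choose_spec
    have hb := b.2.choose_spec
    have hab := (a * b).2.choose_spec
    have : χ (a * b).2.choose = χ (a.2.choose * b.2.choose) :=
      key _ _ (by rw [hab, map_mul, ha, hb]; rfl)
    simpa [map_mul] using this
  · intro z
    exact key _ _ (⟨N z, ⟨z, rfl⟩⟩ : N.range).2.choose_spec
end

section
/- Given strictly decreasing integer sequences a_1 > ... > a_n and b_1 > ... > b_{n'} and integers ω₁, ω₂ with a_i + b_j ≠ -(ω₁+ω₂)/2 (i.e. 2(a_i+b_j) ≠ -(ω₁+ω₂)) for all i,j, there exists a half-integer m (m ∈ ℤ + (n+n')/2, modeled as 2m ∈ ℤ of the right parity) which is critical: for all i, j, if 2(a_i + b_j) > -(ω₁+ω₂) then -(a_i+b_j) < m < a_i+b_j+ω₁+ω₂+1, and otherwise a_i+b_j+ω₁+ω₂ < m < -(a_i+b_j)+1. -/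
theorem stmt_18 (n n' : ℕ) (a : Fin n → ℤ) (b : Fin n' → ℤ)
    (ha : StrictAnti a) (hb : StrictAnti b) (w : ℤ)
    (h : ∀ i j, 2 * (a i + b j) ≠ -w) :
    ∃ M : ℤ, M ≡ (n : ℤ) + (n' : ℤ) [ZMOD 2] ∧
      ∀ i j,
        (2 * (a i + b j) > -w →
          -2 * (a i + b j) < M ∧ M < 2 * (a i + b j) + 2 * w + 2) ∧
        (2 * (a i + b j) < -w →
          2 * (a i + b j) + 2 * w < M ∧ M < -2 * (a i + b j) + 2) := by
  refine ⟨if (w - ((n : ℤ) + n')) % 2 = 0 then w else w + 1, ?_, ?_⟩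
  · simp only [Int.ModEq]
    split_ifs with hp <;> omega
  · intro i j
    have := h i j
    split_ifs <;> exact ⟨fun hgt => ⟨by omega, by omega⟩, fun hlt => ⟨by omega, by omega⟩⟩
end
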